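/- arXiv:1404.4415 — 2 statements merged into one kernel-verified Lean document; each statement's English description precedes it below -/
import Mathlib

section
/- Let λ ∈ 𝒫^l_n and let s, t be λ-tableaux with w_s ≤_L w_t in the left order on S_n. If t is standard, then s is standard. -/
namespace FS

open scoped Classical

/-- A node `(r, c, m)`: row `r`, column `c`, component `m` (all 1-based). -/
abbrev Node := ℕ × ℕ × ℕ

/-- Membership of a node in the Young diagram of the multipartition `p`,
where `p m r` is the `r`-th part of the `m`-th component. -/
def InDiag (p : ℕ → ℕ → ℕ) (A : Node) : Prop :=
  1 ≤ A.2.1 ∧ A.2.1 ≤ p A.2.2 A.1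

/-- `p` is an `l`-multipartition of `n` (components indexed `1,…,l`, rows indexed `1,…`). -/
def IsMP (l n : ℕ) (p : ℕ → ℕ → ℕ) : Prop :=
  (∀ m r, (m = 0 ∨ l < m ∨ r = 0 ∨ n < r) → p m r = 0) ∧
  (∀ m r, 1 ≤ r → p m (r + 1) ≤ p m r) ∧
  (∑ m ∈ Finset.Icc 1 l, ∑ r ∈ Finset.Icc 1 n, p m r) = n

/-- Total size of an `l`-multicomposition (rows bounded by `n`). -/
def mpSize (l n : ℕ) (p : ℕ → ℕ → ℕ) : ℕ :=
  ∑ m ∈ Finset.Icc 1 l, ∑ r ∈ Finset.Icc 1 n, p m r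

/-- Size of the `m`-th component. -/
def compSize (n : ℕ) (p : ℕ → ℕ → ℕ) (m : ℕ) : ℕ :=
  ∑ r ∈ Finset.Icc 1 n, p m r

/-- Length of column `c` of component `m`, i.e. `(p^(m))'_c`. -/
def colLen (n : ℕ) (p : ℕ → ℕ → ℕ) (m c : ℕ) : ℕ :=
  ((Finset.Icc 1 n).filter fun r => c ≤ p m r).card

/-- Dominance order on `l`-multicompositions: `Dom l N p q` means `p ⊵ q`. -/
def Dom (l N : ℕ) (p q : ℕ → ℕ → ℕ) : Prop :=
  ∀ m r, 1 ≤ m → m ≤ l →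
    (∑ m' ∈ Finset.Icc 1 (m - 1), compSize N q m') + ∑ r' ∈ Finset.Icc 1 r, q m r' ≤
      (∑ m' ∈ Finset.Icc 1 (m - 1), compSize N p m') + ∑ r' ∈ Finset.Icc 1 r, p m r'

/-- `t` is a `p`-tableau: a bijection from the diagram of `p` onto `{1,…,n}`. -/
def IsTab (n : ℕ) (p : ℕ → ℕ → ℕ) (t : Node → ℕ) : Prop :=
  (∀ A, InDiag p A → 1 ≤ t A ∧ t A ≤ n) ∧
  (∀ A B, InDiag p A → InDiag p B → t A = t B → A = B) ∧
  (∀ i, 1 ≤ i → i ≤ n → ∃ A, InDiag p A ∧ t A = i)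

/-- Entries increase from left to right along each row. -/
def RowStrict (p : ℕ → ℕ → ℕ) (t : Node → ℕ) : Prop :=
  ∀ r c m, InDiag p (r, c, m) → InDiag p (r, c + 1, m) → t (r, c, m) < t (r, c + 1, m)

/-- Entries increase down each column. -/
def ColStrict (p : ℕ → ℕ → ℕ) (t : Node → ℕ) : Prop :=
  ∀ r c m, InDiag p (r, c, m) → InDiag p (r + 1, c, m) → t (r, c, m) < t (r + 1, c, m)

/-- A standard tableau is both row-strict and column-strict. -/
def IsStd (p : ℕ → ℕ → ℕ) (t : Node → ℕ) : Prop := RowStrict p t ∧ ColStrict p t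

/-- The tableau `t_λ`, obtained by writing `1,…,n` in order down successive columns
from left to right (components from `l` down to `1`). -/
def colTab (l n : ℕ) (p : ℕ → ℕ → ℕ) : Node → ℕ := fun A =>
  (∑ m' ∈ Finset.Icc (A.2.2 + 1) l, compSize n p m') +
    (∑ c' ∈ Finset.Icc 1 (A.2.1 - 1), colLen n p A.2.2 c') + A.1

/-- The tableau `t^λ`, obtained by writing `1,…,n` in order along successive rows
from top to bottom (components from `1` up to `l`). -/
def rowTab (n : ℕ) (p : ℕ → ℕ → ℕ) : Node → ℕ := fun A =>
  (∑ m' ∈ Finset.Icc 1 (A.2.2 - 1), compSize n p m') +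
    (∑ r' ∈ Finset.Icc 1 (A.1 - 1), p A.2.2 r') + A.2.1

/-- The Coxeter generator `s_i = (i, i+1)` of the symmetric group. -/
def sw (i : ℕ) : Equiv.Perm ℕ := Equiv.swap i (i + 1)

/-- The product `s_{i_1} ⋯ s_{i_k}` corresponding to a word `L = [i_1,…,i_k]`. -/
def wordProd (L : List ℕ) : Equiv.Perm ℕ := (L.map sw).prod

/-- `L` is an expression for `w` in the Coxeter generators `s_1,…,s_{n-1}` of `S_n`. -/
def IsWord (n : ℕ) (L : List ℕ) (w : Equiv.Perm ℕ) : Prop :=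
  (∀ i ∈ L, 1 ≤ i ∧ i + 1 ≤ n) ∧ wordProd L = w

/-- The Coxeter length of `w ∈ S_n`. -/
noncomputable def len (n : ℕ) (w : Equiv.Perm ℕ) : ℕ :=
  sInf {k | ∃ L, IsWord n L w ∧ L.length = k}

/-- `L` is a reduced expression for `w ∈ S_n`. -/
def IsReduced (n : ℕ) (L : List ℕ) (w : Equiv.Perm ℕ) : Prop :=
  IsWord n L w ∧ L.length = len n w

/-- The Bruhat order on `S_n`: `x ≤ w` iff some reduced expression for `w` has an
expression for `x` as a subsequence. -/
def BruhatLE (n : ℕ) (x w : Equiv.Perm ℕ) : Prop :=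
  ∃ L, IsReduced n L w ∧ ∃ L', L'.Sublist L ∧ wordProd L' = x

/-- Strict Bruhat order. -/
def BruhatLT (n : ℕ) (x w : Equiv.Perm ℕ) : Prop := BruhatLE n x w ∧ x ≠ w

/-- The left (weak) order on `S_n`: `x ≤_L w` iff `ℓ(w) = ℓ(w x⁻¹) + ℓ(x)`. -/
def LeftLE (n : ℕ) (x w : Equiv.Perm ℕ) : Prop :=
  len n w = len n (w * x⁻¹) + len n x

/-- `w` is a permutation of `{1,…,n}` (fixing everything else). -/
def PermOf (n : ℕ) (w : Equiv.Perm ℕ) : Prop := ∀ i, i = 0 ∨ n < i → w i = i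

/-- `w` is the permutation sending the base tableau `base` to the tableau `t`
(e.g. `w = w_t` when `base = t_λ`). -/
def IsPermOfTab (n : ℕ) (p : ℕ → ℕ → ℕ) (base t : Node → ℕ) (w : Equiv.Perm ℕ) : Prop :=
  PermOf n w ∧ ∀ A, InDiag p A → w (base A) = t A

/-- `Shape(t↓j)`: the multicomposition whose `(m, r)` entry is the number of nodes in
row `r` of component `m` whose entry under `t` is at most `j`. -/
def shape (n : ℕ) (p : ℕ → ℕ → ℕ) (t : Node → ℕ) (j : ℕ) : ℕ → ℕ → ℕ :=
  fun m r => ((Finset.Icc 1 n).filter fun c => c ≤ p m r ∧ t (r, c, m) ≤ j).card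

/-- `Shape(t↓j)'`: the conjugate multicomposition, whose `(m, c)` entry is the number of
nodes in column `c` of component `l + 1 - m` whose entry under `t` is at most `j`. -/
def shapeConj (l n : ℕ) (p : ℕ → ℕ → ℕ) (t : Node → ℕ) (j : ℕ) : ℕ → ℕ → ℕ :=
  fun m c => ((Finset.Icc 1 n).filter fun r => c ≤ p (l + 1 - m) r ∧ t (r, c, l + 1 - m) ≤ j).card

/-- `A` lies weakly to the left of `B`. -/
def WeaklyLeft (A B : Node) : Prop :=
  B.2.2 < A.2.2 ∨ (A.2.2 = B.2.2 ∧ A.2.1 ≤ B.2.1)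

/-- `A` lies weakly above `B`. -/
def WeaklyAbove (A B : Node) : Prop :=
  A.2.2 < B.2.2 ∨ (A.2.2 = B.2.2 ∧ A.1 ≤ B.1)

/-- `A` lies weakly to the right of `B`. -/
def WeaklyRight (A B : Node) : Prop :=
  A.2.2 < B.2.2 ∨ (A.2.2 = B.2.2 ∧ B.2.1 ≤ A.2.1)

/-- `t` (a `mu`-tableau) is `lam`-column-dominated on `1,…,j`: each `i ≤ j` appears in `t`
at least as far to the left as it does in `t_lam`. -/
def ColDomOn (l n : ℕ) (lam mu : ℕ → ℕ → ℕ) (t : Node → ℕ) (j : ℕ) : Prop :=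
  ∀ i A B, 1 ≤ i → i ≤ j → InDiag mu A → t A = i → InDiag lam B →
    colTab l n lam B = i → WeaklyLeft A B

/-- `t` is weakly `lam`-column-dominated on `1,…,j`: each `i ≤ j` appears in `t` in a
component at least as far to the left as it does in `t_lam`. -/
def WColDomOn (l n : ℕ) (lam mu : ℕ → ℕ → ℕ) (t : Node → ℕ) (j : ℕ) : Prop :=
  ∀ i A B, 1 ≤ i → i ≤ j → InDiag mu A → t A = i → InDiag lam B →
    colTab l n lam B = i → B.2.2 ≤ A.2.2

/-- `t` (a `mu`-tableau) is `lam`-row-dominated on `1,…,j`: each `i ≤ j` appears in `t`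
at least as high as it does in `t^lam`. -/
def RowDomOn (n : ℕ) (lam mu : ℕ → ℕ → ℕ) (t : Node → ℕ) (j : ℕ) : Prop :=
  ∀ i A B, 1 ≤ i → i ≤ j → InDiag mu A → t A = i → InDiag lam B →
    rowTab n lam B = i → WeaklyAbove A B

/-- The multipartition `λ_L(c, m)`: the first `c` columns of component `m`, followed by
components `m+1,…,l`. -/
def leftPart (lam : ℕ → ℕ → ℕ) (c m : ℕ) : ℕ → ℕ → ℕ := fun k r =>
  if k = 0 then 0 else if k = 1 then min (lam m r) c else lam (m + k - 1) r

/-- The multipartition `λ_R(c, m)`: components `1,…,m-1`, followed by the part of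
component `m` after its first `c` columns. -/
def rightPart (lam : ℕ → ℕ → ℕ) (c m : ℕ) : ℕ → ℕ → ℕ := fun k r =>
  if k < m then lam k r else if k = m then lam m r - c else 0

/-- The multipartition `λ_T(r₀, m)`: components `1,…,m-1`, followed by the first `r₀`
rows of component `m`. -/
def topPart (lam : ℕ → ℕ → ℕ) (r₀ m : ℕ) : ℕ → ℕ → ℕ := fun k r =>
  if k < m then lam k r else if k = m then (if r ≤ r₀ then lam m r else 0) else 0

/-- The multipartition `λ_B(r₀, m)`: the rows of component `m` after row `r₀`, followed
by components `m+1,…,l`. -/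
def botPart (lam : ℕ → ℕ → ℕ) (r₀ m : ℕ) : ℕ → ℕ → ℕ := fun k r =>
  if k = 0 ∨ r = 0 then 0 else if k = 1 then lam m (r₀ + r) else lam (m + k - 1) r

/-- The glued tableau `t_L # t_R`: places `1,…,n_L` on the left part as in `t_L`, and
places `n_L + t_R(A)` at the node corresponding to each node `A` of the right part. -/
def glueLR (nL c m : ℕ) (tL tR : Node → ℕ) : Node → ℕ := fun A =>
  if A.2.2 < m then nL + tR A
  else if A.2.2 = m then
    (if A.2.1 ≤ c then tL (A.1, A.2.1, 1) else nL + tR (A.1, A.2.1 - c, m))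
  else tL (A.1, A.2.1, A.2.2 - m + 1)

/-- The tableau `t⁺` obtained from a tableau `t` of `μ_R(1,m)` by increasing all entries
by `k`, adjoining a first column with entries `1,…,k` to component `m`, and adjoining
empty components `m+1,…,l`. -/
def addFirstCol (k m : ℕ) (t : Node → ℕ) : Node → ℕ := fun A =>
  if A.2.2 = m then (if A.2.1 = 1 then A.1 else k + t (A.1, A.2.1 - 1, m))
  else k + t A

/-- The tableau `t⁺` obtained from a tableau `t` of `μ_L(d-1,m)` by adjoining empty
components `1,…,m-1` and adjoining a column `d` to component `m` with entries
`nk+1,…,nk+k` from top to bottom. -/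
def addLastCol (nk m d : ℕ) (t : Node → ℕ) : Node → ℕ := fun A =>
  if A.2.2 = m then (if A.2.1 = d then nk + A.1 else t (A.1, A.2.1, 1))
  else t (A.1, A.2.1, A.2.2 - m + 1)

/-- The `i`-th smallest element of a finite set of naturals (1-based). -/
def nthElt (S : Finset ℕ) (i : ℕ) : ℕ := (S.sort (· ≤ ·)).getD (i - 1) 0

/-- The set `S_B` of entries of `t_λ` lying in the bottom region (component `> m`, or
component `m` in a row `> r₀`). -/
noncomputable def SB (l n : ℕ) (lam : ℕ → ℕ → ℕ) (r₀ m : ℕ) : Finset ℕ :=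
  (Finset.Icc 1 n).filter fun i =>
    ∃ A, InDiag lam A ∧ colTab l n lam A = i ∧ (m < A.2.2 ∨ (A.2.2 = m ∧ r₀ < A.1))

/-- The glued tableau `t #̄ s`: on the bottom region the entries are `lab_B ∘ t` and on
the top region they are `lab_T ∘ s`, where `lab_B`, `lab_T` are the order-preserving
bijections onto `S_B`, `S_T`. -/
def glueBT (S_B S_T : Finset ℕ) (r₀ m : ℕ) (tB tT : Node → ℕ) : Node → ℕ := fun A =>
  if A.2.2 < m then nthElt S_T (tT A)
  else if A.2.2 = m then
    (if A.1 ≤ r₀ then nthElt S_T (tT A) else nthElt S_B (tB (A.1 - r₀, A.2.1, 1)))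
  else nthElt S_B (tB (A.1, A.2.1, A.2.2 - m + 1))

/-- The residue of a node `(r, c, m)` with respect to the multicharge `κ`:
`κ_m + c - r` in `ℤ/eℤ` (with `ZMod 0 = ℤ` encoding `e = ∞`). -/
def resNode (e : ℕ) (κ : ℕ → ZMod e) (A : Node) : ZMod e :=
  κ A.2.2 + (A.2.1 : ZMod e) - (A.1 : ZMod e)
/-! The inversions of `w_s` are among those of `w_t`. Indeed, writing `w_t = s_{i₁} ⋯ s_{i_k} w_s`
with `k = ℓ(w_t w_s⁻¹)`, additivity of the lengths forces each of the `k` left multiplications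
to raise the length by one, and a left multiplication by `s_i` that raises the length adds
exactly one inversion and keeps the old ones. On the other hand `w · t_λ` is standard as soon
as `w` inverts no pair of entries of `t_λ` that are adjacent in a row or a column, because
`t_λ` itself increases along rows and columns. -/

section PermOf

variable {n : ℕ} {u w : Equiv.Perm ℕ}

lemma PermOf.apply_mem (hw : PermOf n w) {j : ℕ} (hj : 1 ≤ j) (hjn : j ≤ n) :
    1 ≤ w j ∧ w j ≤ n := by
  by_contra h
  have hfix : w (w j) = w j := hw _ (by omega)
  have := w.injective hfix
  omega

lemma PermOf.inv (hw : PermOf n w) : PermOf n w⁻¹ := fun i hi => by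
  rw [Equiv.Perm.inv_eq_iff_eq, hw i hi]

lemma PermOf.mul (hu : PermOf n u) (hw : PermOf n w) : PermOf n (u * w) := fun i hi => by
  rw [Equiv.Perm.mul_apply, hw i hi, hu i hi]

lemma permOf_sw {i : ℕ} (hi : 1 ≤ i) (hin : i + 1 ≤ n) : PermOf n (sw i) := fun j hj => by
  simp only [sw, Equiv.swap_apply_def]
  split_ifs <;> omega

lemma PermOf.eq_one_of_forall_lt_succ (hw : PermOf n w)
    (h : ∀ i, 1 ≤ i → i + 1 ≤ n → w i < w (i + 1)) : w = 1 := by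
  have hmono : StrictMono w := strictMono_nat_of_lt_succ fun i => by
    by_cases hi : 1 ≤ i ∧ i + 1 ≤ n
    · exact h i hi.1 hi.2
    rcases Nat.eq_zero_or_pos i with rfl | hi0
    · rw [hw 0 (Or.inl rfl)]
      by_cases h1 : 1 ≤ n
      · exact (hw.apply_mem le_rfl h1).1
      · rw [hw 1 (by omega)]; omega
    · rw [hw (i + 1) (by omega)]
      by_cases hin : i ≤ n
      · have := (hw.apply_mem hi0 hin).2; omega
      · rw [hw i (by omega)]; omega
  -- the only order automorphism of a well-order is the identity
  ext i
  exact congrArg (· i) (Subsingleton.elim (hmono.orderIsoOfSurjective w w.surjective)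
    (OrderIso.refl ℕ))

lemma PermOf.exists_descent (hw : PermOf n w) (hne : w ≠ 1) :
    ∃ i, 1 ≤ i ∧ i + 1 ≤ n ∧ w (i + 1) < w i := by
  by_contra! h
  refine hne (hw.eq_one_of_forall_lt_succ fun i hi hin => ?_)
  have hne' : w i ≠ w (i + 1) := fun he => by have := w.injective he; omega
  exact lt_of_le_of_ne (h i hi hin) hne'

end PermOf

section Words

variable {n : ℕ} {L M : List ℕ} {u w : Equiv.Perm ℕ}

lemma wordProd_cons (i : ℕ) (L : List ℕ) : wordProd (i :: L) = sw i * wordProd L := by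
  simp [wordProd]

lemma isWord_nil : IsWord n [] 1 := ⟨by simp, by simp [wordProd]⟩

lemma IsWord.cons {i : ℕ} (hi : 1 ≤ i) (hin : i + 1 ≤ n) (hL : IsWord n L w) :
    IsWord n (i :: L) (sw i * w) := by
  refine ⟨?_, by rw [wordProd_cons, hL.2]⟩
  rintro j (_ | ⟨_, hj⟩)
  exacts [⟨hi, hin⟩, hL.1 j hj]

lemma IsWord.append (hL : IsWord n L u) (hM : IsWord n M w) : IsWord n (L ++ M) (u * w) := by
  refine ⟨fun i hi => ?_, ?_⟩
  · rcases List.mem_append.mp hi with h | h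
    exacts [hL.1 i h, hM.1 i h]
  · rw [← hL.2, ← hM.2]
    simp [wordProd]

lemma IsWord.permOf (hL : IsWord n L w) : PermOf n w := by
  obtain ⟨hL, rfl⟩ := hL
  induction L with
  | nil => exact fun i _ => rfl
  | cons i L ih =>
    obtain ⟨hi, hL⟩ := List.forall_mem_cons.mp hL
    rw [wordProd_cons]
    exact (permOf_sw hi.1 hi.2).mul (ih hL)

lemma len_le_length (hL : IsWord n L w) : len n w ≤ L.length := Nat.sInf_le ⟨L, hL, rfl⟩

end Words

def inversions (n : ℕ) (w : Equiv.Perm ℕ) : Finset (ℕ × ℕ) :=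
  ((Finset.Icc 1 n) ×ˢ (Finset.Icc 1 n)).filter fun p => p.1 < p.2 ∧ w p.2 < w p.1

section Inversions

variable {n i : ℕ} {w : Equiv.Perm ℕ}

lemma inversions_one : inversions n 1 = ∅ :=
  Finset.filter_eq_empty_iff.mpr fun _ _ h => lt_asymm h.1 h.2

lemma PermOf.mem_inversions (hw : PermOf n w) {a b : ℕ} :
    (a, b) ∈ inversions n w ↔ a < b ∧ w b < w a := by
  simp only [inversions, Finset.mem_filter, Finset.mem_product, Finset.mem_Icc,
    and_iff_right_iff_imp]
  rintro ⟨hab, hba⟩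
  have ha : 1 ≤ a := by
    by_contra! ha0
    rw [hw a (by omega)] at hba
    omega
  have hb : b ≤ n := by
    by_contra! hbn
    rw [hw b (by omega)] at hba
    by_cases han : a ≤ n
    · have := (hw.apply_mem ha han).2; omega
    · rw [hw a (by omega)] at hba; omega
  omega

lemma sw_lt_sw_of_lt {x y : ℕ} (hxy : x < y) (hne : ¬(x = i ∧ y = i + 1)) :
    sw i x < sw i y := by
  simp only [sw, Equiv.swap_apply_def]
  split_ifs <;> omega

lemma inversions_sw_mul_of_lt (hw : PermOf n w) (hi : 1 ≤ i) (hin : i + 1 ≤ n)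
    (hlt : w⁻¹ i < w⁻¹ (i + 1)) :
    inversions n (sw i * w) = insert (w⁻¹ i, w⁻¹ (i + 1)) (inversions n w) := by
  have hsw : PermOf n (sw i * w) := (permOf_sw hi hin).mul hw
  ext ⟨x, y⟩
  simp only [Finset.mem_insert, hsw.mem_inversions, hw.mem_inversions, Prod.mk.injEq,
    Equiv.Perm.mul_apply]
  constructor
  · rintro ⟨hxy, hswap⟩
    by_cases hpair : w x = i ∧ w y = i + 1
    · exact Or.inl ⟨by rw [← hpair.1]; simp, by rw [← hpair.2]; simp⟩
    refine Or.inr ⟨hxy, lt_of_le_of_ne (not_lt.mp fun hlt' => ?_) fun he => ?_⟩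
    · exact lt_asymm hswap (sw_lt_sw_of_lt hlt' hpair)
    · have := w.injective he; omega
  · rintro (⟨rfl, rfl⟩ | ⟨hxy, hwyx⟩)
    · simpa [sw] using hlt
    · refine ⟨hxy, sw_lt_sw_of_lt hwyx fun ⟨hy, hx⟩ => ?_⟩
      rw [← hx, ← hy] at hlt
      simp only [Equiv.Perm.coe_inv, Equiv.symm_apply_apply] at hlt
      omega

lemma card_inversions_sw_mul_of_lt (hw : PermOf n w) (hi : 1 ≤ i) (hin : i + 1 ≤ n)
    (hlt : w⁻¹ i < w⁻¹ (i + 1)) :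
    (inversions n (sw i * w)).card = (inversions n w).card + 1 := by
  rw [inversions_sw_mul_of_lt hw hi hin hlt, Finset.card_insert_of_notMem]
  simp only [hw.mem_inversions, Equiv.Perm.coe_inv, Equiv.apply_symm_apply]
  omega

lemma card_inversions_sw_mul_of_gt (hw : PermOf n w) (hi : 1 ≤ i) (hin : i + 1 ≤ n)
    (hgt : w⁻¹ (i + 1) < w⁻¹ i) :
    (inversions n (sw i * w)).card + 1 = (inversions n w).card := by
  have h := card_inversions_sw_mul_of_lt ((permOf_sw hi hin).mul hw) hi hin (by
    simpa [mul_inv_rev, sw, Equiv.swap_inv] using hgt)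
  rwa [sw, ← mul_assoc, Equiv.swap_mul_self, one_mul, eq_comm] at h

lemma card_inversions_sw_mul_le (hw : PermOf n w) (hi : 1 ≤ i) (hin : i + 1 ≤ n) :
    (inversions n (sw i * w)).card ≤ (inversions n w).card + 1 := by
  rcases lt_or_gt_of_ne (w⁻¹.injective.ne (show i ≠ i + 1 by omega)) with h | h
  · exact (card_inversions_sw_mul_of_lt hw hi hin h).le
  · have := card_inversions_sw_mul_of_gt hw hi hin h; omega

end Inversions

section Length

variable {n : ℕ} {L : List ℕ} {u v w : Equiv.Perm ℕ}

lemma card_inversions_le_length (hL : IsWord n L w) : (inversions n w).card ≤ L.length := by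
  obtain ⟨hL, rfl⟩ := hL
  induction L with
  | nil => simp [wordProd, inversions_one]
  | cons i L ih =>
    obtain ⟨hi, hL⟩ := List.forall_mem_cons.mp hL
    rw [wordProd_cons, List.length_cons]
    have := card_inversions_sw_mul_le (IsWord.permOf ⟨hL, rfl⟩) hi.1 hi.2
    have := ih hL
    omega

lemma PermOf.exists_isWord_length_eq_card (hw : PermOf n w) :
    ∃ L, IsWord n L w ∧ L.length = (inversions n w).card := by
  induction hk : (inversions n w).card using Nat.strong_induction_on generalizing w with
  | _ k ih =>
    by_cases h1 : w = 1
    · subst h1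
      exact ⟨[], isWord_nil, by rw [← hk, inversions_one, Finset.card_empty, List.length_nil]⟩
    obtain ⟨i, hi, hin, hdesc⟩ := hw.inv.exists_descent (inv_ne_one.mpr h1)
    have hcard := card_inversions_sw_mul_of_gt hw hi hin hdesc
    obtain ⟨L, hL, hlen⟩ := ih _ (by omega) ((permOf_sw hi hin).mul hw) rfl
    refine ⟨i :: L, ?_, by simp only [List.length_cons]; omega⟩
    simpa [sw, ← mul_assoc] using hL.cons hi hin

lemma PermOf.len_eq_card_inversions (hw : PermOf n w) : len n w = (inversions n w).card := by
  obtain ⟨L, hL, hlen⟩ := hw.exists_isWord_length_eq_card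
  refine le_antisymm (hlen ▸ len_le_length hL) ?_
  obtain ⟨M, hM, hMlen⟩ := Nat.sInf_mem (s := {k | ∃ L, IsWord n L w ∧ L.length = k})
    ⟨_, L, hL, rfl⟩
  rw [len, ← hMlen]
  exact card_inversions_le_length hM

lemma PermOf.exists_isWord_length_eq_len (hw : PermOf n w) :
    ∃ L, IsWord n L w ∧ L.length = len n w :=
  hw.len_eq_card_inversions ▸ hw.exists_isWord_length_eq_card

lemma len_mul_le (hu : PermOf n u) (hw : PermOf n w) : len n (u * w) ≤ len n u + len n w := by
  obtain ⟨L, hL, hLlen⟩ := hu.exists_isWord_length_eq_len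
  obtain ⟨M, hM, hMlen⟩ := hw.exists_isWord_length_eq_len
  simpa [hLlen, hMlen] using len_le_length (hL.append hM)

lemma inversions_subset_sw_mul {i : ℕ} (hw : PermOf n w) (hi : 1 ≤ i) (hin : i + 1 ≤ n)
    (hlen : len n w < len n (sw i * w)) : inversions n w ⊆ inversions n (sw i * w) := by
  rw [hw.len_eq_card_inversions, ((permOf_sw hi hin).mul hw).len_eq_card_inversions] at hlen
  rcases lt_or_gt_of_ne (w⁻¹.injective.ne (show i ≠ i + 1 by omega)) with h | h
  · rw [inversions_sw_mul_of_lt hw hi hin h]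
    exact Finset.subset_insert _ _
  · have := card_inversions_sw_mul_of_gt hw hi hin h; omega

lemma inversions_subset_of_isWord (hL : IsWord n L u) (hv : PermOf n v)
    (hlen : len n (u * v) = L.length + len n v) : inversions n v ⊆ inversions n (u * v) := by
  induction L generalizing u with
  | nil => rw [← hL.2]; simp [wordProd]
  | cons i L ih =>
    obtain ⟨hL, rfl⟩ := hL
    obtain ⟨hi, hL⟩ := List.forall_mem_cons.mp hL
    have hL' : IsWord n L (wordProd L) := ⟨hL, rfl⟩
    have hv' : PermOf n (wordProd L * v) := hL'.permOf.mul hv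
    rw [wordProd_cons, mul_assoc, List.length_cons] at hlen
    rw [wordProd_cons, mul_assoc]
    have hsw_len : len n (sw i) ≤ 1 := by simpa using len_le_length (isWord_nil.cons hi.1 hi.2)
    have hup := len_mul_le (permOf_sw hi.1 hi.2) hv'
    have hdown := (len_mul_le hL'.permOf hv).trans (Nat.add_le_add_right (len_le_length hL') _)
    have hv'_len : len n (wordProd L * v) = L.length + len n v := by omega
    exact (ih hL' hv'_len).trans (inversions_subset_sw_mul hv' hi.1 hi.2 (by omega))

lemma inversions_subset_of_len_mul (hu : PermOf n u) (hv : PermOf n v)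
    (hlen : len n (u * v) = len n u + len n v) : inversions n v ⊆ inversions n (u * v) := by
  obtain ⟨L, hL, hlenL⟩ := hu.exists_isWord_length_eq_len
  exact inversions_subset_of_isWord hL hv (hlenL ▸ hlen)

end Length

section Tableaux

variable {l n : ℕ} {lam : ℕ → ℕ → ℕ}

lemma colTab_lt_colTab_succ_col (hlam : IsMP l n lam) {r c m : ℕ}
    (hC : InDiag lam (r, c, m)) :
    colTab l n lam (r, c, m) < colTab l n lam (r, c + 1, m) := by
  obtain ⟨hc, hcr⟩ := hC
  simp only at hc hcr
  have hr : 1 ≤ r ∧ r ≤ n := by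
    by_contra h
    have := hlam.1 m r (by omega)
    omega
  have hcol : 0 < colLen n lam m c :=
    Finset.card_pos.mpr ⟨r, by simpa [Finset.mem_filter, Finset.mem_Icc] using ⟨hr, hcr⟩⟩
  obtain ⟨c, rfl⟩ := Nat.exists_eq_add_of_le' hc
  simp only [colTab, Nat.add_sub_cancel, Finset.sum_Icc_succ_top (by omega : 1 ≤ c + 1)]
  omega

lemma colTab_lt_colTab_succ_row {r c m : ℕ} :
    colTab l n lam (r, c, m) < colTab l n lam (r + 1, c, m) := by
  simp only [colTab]
  omega

lemma IsStd.congr {t t' : Node → ℕ} (h : ∀ A, InDiag lam A → t A = t' A) (ht : IsStd lam t) :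
    IsStd lam t' :=
  ⟨fun r c m hC hD => h _ hC ▸ h _ hD ▸ ht.1 r c m hC hD,
    fun r c m hC hD => h _ hC ▸ h _ hD ▸ ht.2 r c m hC hD⟩

lemma IsStd.of_inversions_subset (hlam : IsMP l n lam) {v w : Equiv.Perm ℕ}
    (hv : PermOf n v) (hsub : inversions n v ⊆ inversions n w)
    (hw : IsStd lam fun A => w (colTab l n lam A)) :
    IsStd lam fun A => v (colTab l n lam A) := by
  have key {a b : ℕ} (hab : a < b) (hwab : w a < w b) : v a < v b := by
    refine lt_of_not_ge fun hle => ?_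
    have hne : v b ≠ v a := v.injective.ne hab.ne'
    exact lt_asymm hwab (Finset.mem_filter.mp
      (hsub (hv.mem_inversions.mpr ⟨hab, lt_of_le_of_ne hle hne⟩))).2.2
  exact ⟨fun r c m hC hD => key (colTab_lt_colTab_succ_col hlam hC) (hw.1 r c m hC hD),
    fun r c m hC hD => key colTab_lt_colTab_succ_row (hw.2 r c m hC hD)⟩

end Tableaux

theorem left_order_standard_general (l n : ℕ)
    (lam : ℕ → ℕ → ℕ) (hlam : IsMP l n lam)
    (s t : Node → ℕ)
    (ws wt : Equiv.Perm ℕ)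
    (hws : IsPermOfTab n lam (colTab l n lam) s ws)
    (hwt : IsPermOfTab n lam (colTab l n lam) t wt)
    (hle : LeftLE n ws wt) (htstd : IsStd lam t) :
    IsStd lam s := by
  obtain ⟨hwsP, hws⟩ := hws
  obtain ⟨hwtP, hwt⟩ := hwt
  have hsub : inversions n ws ⊆ inversions n wt := by
    simpa using inversions_subset_of_len_mul (hwtP.mul hwsP.inv) hwsP
      (by simpa [LeftLE] using hle)
  exact (htstd.congr fun A hA => (hwt A hA).symm).of_inversions_subset hlam hwsP hsub
    |>.congr hws

/-- If `s, t` are `λ`-tableaux with `w_s ≤_L w_t` in the left order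
and `t` is standard, then `s` is standard. -/
theorem left_order_standard (l n : ℕ) (hl : 1 ≤ l) (hn : 1 ≤ n)
    (lam : ℕ → ℕ → ℕ) (hlam : IsMP l n lam)
    (s t : Node → ℕ) (hs : IsTab n lam s) (ht : IsTab n lam t)
    (ws wt : Equiv.Perm ℕ)
    (hws : IsPermOfTab n lam (colTab l n lam) s ws)
    (hwt : IsPermOfTab n lam (colTab l n lam) t wt)
    (hle : LeftLE n ws wt) (htstd : IsStd lam t) :
    IsStd lam s :=
  left_order_standard_general l n lam hlam s t ws wt hws hwt hle htstd

end FS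
end

section
/- Let λ, μ ∈ 𝒫^l_n, let 1 ≤ j ≤ n and let s ∈ Std(μ). Then s is λ-column-dominated on 1,…,j if and only if Shape(t_λ↓m) ⊵ Shape(s↓m) for all m = 1,…,j. -/
namespace FS

open scoped Classical

/-!
A dominance partial sum of `Shape(t↓i)` counts the cells of `t↓i` lying weakly above row `r₀`
of component `m`.

If `s` is column-dominated, let `G` be the set of columns of component `m` in which `t_λ↓i`
reaches below row `r₀`. The region `L` consisting of the components after `m` and the columns
`G` of component `m` is closed to the left, so `s↓i` meets `L` at least as often as `t_λ↓i` does.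
The cells of `t_λ↓i` outside the region above row `r₀` all lie in `L`, and `t_λ↓i` contains the
whole `r₀ × |G|` block where `L` meets that region, whereas `s↓i` has at most `r₀ |G|` cells
there. Since both tableaux place `i` entries, the dominance inequality follows.

Conversely, if the entry `k = s(A)` sits strictly to the right of its position `B` in `t_λ`,
then `s↓k` contains the whole rectangle of cells above and to the left of `A`, while every
cell of `t_λ↓k` lies weakly to the left of `B`; comparing the counts above the row of `A`
contradicts the dominance at `k`.
-/

open Finset

section Diagram

variable {l n : ℕ} {p : ℕ → ℕ → ℕ}

theorem IsMP.apply_le_apply (hp : IsMP l n p) (m : ℕ) {a b : ℕ} (ha : 1 ≤ a) (hab : a ≤ b) :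
    p m b ≤ p m a := by
  induction b, hab using Nat.le_induction with
  | base => rfl
  | succ b hb ih => exact (hp.2.1 m b (ha.trans hb)).trans ih

theorem IsMP.apply_le (hp : IsMP l n p) (m r : ℕ) : p m r ≤ n := by
  by_cases h : m = 0 ∨ l < m ∨ r = 0 ∨ n < r
  · simp [hp.1 m r h]
  calc p m r ≤ ∑ r' ∈ Icc 1 n, p m r' :=
        single_le_sum (fun _ _ => Nat.zero_le _) (mem_Icc.2 ⟨by omega, by omega⟩)
    _ ≤ ∑ m' ∈ Icc 1 l, ∑ r' ∈ Icc 1 n, p m' r' :=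
        single_le_sum (f := fun m' => ∑ r' ∈ Icc 1 n, p m' r') (fun _ _ => Nat.zero_le _)
          (mem_Icc.2 ⟨by omega, by omega⟩)
    _ = n := hp.2.2

theorem IsMP.bounds (hp : IsMP l n p) {r c m : ℕ} (h : InDiag p (r, c, m)) :
    1 ≤ r ∧ r ≤ n ∧ 1 ≤ c ∧ c ≤ n ∧ 1 ≤ m ∧ m ≤ l := by
  have hc : 1 ≤ c := h.1
  have hcp : c ≤ p m r := h.2
  have hrange : ¬(m = 0 ∨ l < m ∨ r = 0 ∨ n < r) := fun h => by
    simp only [hp.1 m r h] at hcp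
    omega
  have := hp.apply_le m r
  omega

theorem IsMP.inDiag_of_le (hp : IsMP l n p) {r c m r' c' : ℕ} (h : InDiag p (r', c', m))
    (hr : 1 ≤ r) (hrr : r ≤ r') (hc : 1 ≤ c) (hcc : c ≤ c') : InDiag p (r, c, m) :=
  ⟨hc, hcc.trans (h.2.trans (hp.apply_le_apply m hr hrr))⟩

theorem IsStd.mono (hp : IsMP l n p) {x : Node → ℕ} (hx : IsStd p x) {r c m r' c' : ℕ}
    (h : InDiag p (r', c', m)) (hr : 1 ≤ r) (hrr : r ≤ r') (hc : 1 ≤ c) (hcc : c ≤ c') :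
    x (r, c, m) ≤ x (r', c', m) := by
  have along_row : ∀ d, c ≤ d → InDiag p (r, d, m) → x (r, c, m) ≤ x (r, d, m) := by
    intro d hd
    induction d, hd using Nat.le_induction with
    | base => exact fun _ => le_rfl
    | succ d hd ih =>
      intro hd1
      have hd0 : InDiag p (r, d, m) := hp.inDiag_of_le hd1 hr le_rfl (hc.trans hd) d.le_succ
      exact (ih hd0).trans (hx.1 r d m hd0 hd1).le
  have down_col : ∀ e, r ≤ e → InDiag p (e, c', m) → x (r, c', m) ≤ x (e, c', m) := by
    intro e he
    induction e, he using Nat.le_induction with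
    | base => exact fun _ => le_rfl
    | succ e he ih =>
      intro he1
      have he0 : InDiag p (e, c', m) := hp.inDiag_of_le he1 (hr.trans he) e.le_succ h.1 le_rfl
      exact (ih he0).trans (hx.2 e c' m he0 he1).le
  exact (along_row c' hcc (hp.inDiag_of_le h hr hrr (hc.trans hcc) le_rfl)).trans
    (down_col r' hrr h)

end Diagram

section Cells

variable {l n : ℕ} {p : ℕ → ℕ → ℕ} {x : Node → ℕ} {i : ℕ}

noncomputable def cells (l n : ℕ) (p : ℕ → ℕ → ℕ) : Finset Node :=
  (Icc 1 n ×ˢ Icc 1 n ×ˢ Icc 1 l).filter (InDiag p)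

/-- The cells of `x↓i`. -/
noncomputable def cellsLE (l n : ℕ) (p : ℕ → ℕ → ℕ) (x : Node → ℕ) (i : ℕ) : Finset Node :=
  (cells l n p).filter fun A => x A ≤ i

theorem mem_cells (hp : IsMP l n p) {A : Node} : A ∈ cells l n p ↔ InDiag p A := by
  obtain ⟨r, c, m⟩ := A
  simp only [cells, mem_filter, mem_product, mem_Icc, and_iff_right_iff_imp]
  intro h
  have := hp.bounds h
  omega

theorem mem_cellsLE (hp : IsMP l n p) {A : Node} :
    A ∈ cellsLE l n p x i ↔ InDiag p A ∧ x A ≤ i := by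
  rw [cellsLE, mem_filter, mem_cells hp]

theorem sum_sum_card_filter (M R C : Finset ℕ) (P : Node → Prop) [DecidablePred P] :
    ∑ m ∈ M, ∑ r ∈ R, (C.filter fun c => P (r, c, m)).card =
      ((R ×ˢ C ×ˢ M).filter P).card := by
  simp only [card_filter, sum_product]
  rw [sum_comm]
  exact sum_congr rfl fun _ _ => sum_comm

theorem card_cells (hp : IsMP l n p) : (cells l n p).card = n := by
  rw [cells, ← sum_sum_card_filter]
  refine (sum_congr rfl fun m _ => sum_congr rfl fun r _ => ?_).trans hp.2.2
  have hrow : (Icc 1 n).filter (fun c => InDiag p (r, c, m)) = Icc 1 (p m r) := by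
    ext c
    have := hp.apply_le m r
    rw [mem_filter, mem_Icc, mem_Icc, InDiag]
    dsimp only
    omega
  rw [hrow, Nat.card_Icc, Nat.add_sub_cancel]

/-- Onto because `[p]` has exactly `n` cells. -/
theorem isTab_of_injOn (hp : IsMP l n p) (hx : ∀ A, InDiag p A → 1 ≤ x A ∧ x A ≤ n)
    (hinj : ∀ A B, InDiag p A → InDiag p B → x A = x B → A = B) : IsTab n p x := by
  refine ⟨hx, hinj, fun k hk hkn => ?_⟩
  have himage : (cells l n p).image x = Icc 1 n := by
    refine eq_of_subset_of_card_le (fun k hk => ?_) ?_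
    · obtain ⟨A, hA, rfl⟩ := mem_image.1 hk
      exact mem_Icc.2 (hx A ((mem_cells hp).1 hA))
    · rw [card_image_of_injOn fun A hA B hB =>
        hinj A B ((mem_cells hp).1 hA) ((mem_cells hp).1 hB), card_cells hp, Nat.card_Icc]
      omega
  obtain ⟨A, hA, hxA⟩ := mem_image.1 (himage ▸ mem_Icc.2 ⟨hk, hkn⟩)
  exact ⟨A, (mem_cells hp).1 hA, hxA⟩

theorem card_cellsLE (hp : IsMP l n p) (hx : IsTab n p x) (hi : i ≤ n) :
    (cellsLE l n p x i).card = i := by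
  have himage : (cellsLE l n p x i).image x = Icc 1 i := by
    ext k
    simp only [mem_image, mem_cellsLE hp, mem_Icc]
    constructor
    · rintro ⟨A, ⟨hA, hAi⟩, rfl⟩
      exact ⟨(hx.1 A hA).1, hAi⟩
    · rintro ⟨hk, hki⟩
      obtain ⟨A, hA, rfl⟩ := hx.2.2 k hk (hki.trans hi)
      exact ⟨A, ⟨hA, hki⟩, rfl⟩
  rw [← card_image_of_injOn (f := x), himage, Nat.card_Icc, Nat.add_sub_cancel]
  exact fun A hA B hB => hx.2.1 A B ((mem_cellsLE hp).1 hA).1 ((mem_cellsLE hp).1 hB).1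

theorem sum_shape_eq_card (hp : IsMP l n p) (x : Node → ℕ) (i m r : ℕ) :
    (∑ m' ∈ Icc 1 (m - 1), compSize n (shape n p x i) m') + ∑ r' ∈ Icc 1 r, shape n p x i m r' =
      ((cellsLE l n p x i).filter fun A => WeaklyAbove A (r, 0, m)).card := by
  have hshape : ∀ m' r', shape n p x i m' r' =
      ((Icc 1 n).filter fun c => InDiag p (r', c, m') ∧ x (r', c, m') ≤ i).card := by
    intro m' r'
    refine congrArg card (filter_congr fun c hc => ?_)
    simp only [InDiag, (mem_Icc.1 hc).1, true_and]
  have hsplit : (cellsLE l n p x i).filter (fun A => WeaklyAbove A (r, 0, m)) =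
      ((Icc 1 n ×ˢ Icc 1 n ×ˢ Icc 1 (m - 1)).filter fun A => InDiag p A ∧ x A ≤ i) ∪
        ((Icc 1 r ×ˢ Icc 1 n ×ˢ {m}).filter fun A => InDiag p A ∧ x A ≤ i) := by
    ext ⟨r', c, m'⟩
    rw [mem_filter, mem_cellsLE hp, mem_union, mem_filter, mem_filter]
    simp only [mem_product, mem_Icc, mem_singleton, WeaklyAbove]
    by_cases hA : InDiag p (r', c, m')
    · have := hp.bounds hA
      simp only [hA, true_and]
      omega
    · simp [hA]
  have hdisj : Disjoint
      ((Icc 1 n ×ˢ Icc 1 n ×ˢ Icc 1 (m - 1)).filter fun A => InDiag p A ∧ x A ≤ i)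
      ((Icc 1 r ×ˢ Icc 1 n ×ˢ {m}).filter fun A => InDiag p A ∧ x A ≤ i) := by
    refine disjoint_left.2 fun A hA hA' => ?_
    simp only [mem_filter, mem_product, mem_Icc, mem_singleton] at hA hA'
    omega
  rw [hsplit, card_union_of_disjoint hdisj, ← sum_sum_card_filter, ← sum_sum_card_filter,
    sum_singleton]
  simp only [compSize, hshape]

theorem dom_shape_iff {q : ℕ → ℕ → ℕ} (hp : IsMP l n p) (hq : IsMP l n q) (x y : Node → ℕ)
    (i : ℕ) :
    Dom l n (shape n p x i) (shape n q y i) ↔ ∀ m r, 1 ≤ m → m ≤ l →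
      ((cellsLE l n q y i).filter fun A => WeaklyAbove A (r, 0, m)).card ≤
        ((cellsLE l n p x i).filter fun A => WeaklyAbove A (r, 0, m)).card := by
  simp only [Dom, sum_shape_eq_card hp, sum_shape_eq_card hq]

end Cells

section ColTab

variable {l n : ℕ} {p : ℕ → ℕ → ℕ}

theorem sum_Icc_sub_one_add {M : Type*} [AddCommMonoid M] (f : ℕ → M) {c : ℕ} (hc : 1 ≤ c) :
    (∑ k ∈ Icc 1 (c - 1), f k) + f c = ∑ k ∈ Icc 1 c, f k := by
  obtain ⟨d, rfl⟩ := Nat.exists_eq_add_of_le' hc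
  rw [Nat.add_sub_cancel, sum_Icc_succ_top (by omega)]

theorem le_colLen (hp : IsMP l n p) {r c m : ℕ} (h : InDiag p (r, c, m)) :
    r ≤ colLen n p m c := by
  obtain ⟨-, hrn, hc, -⟩ := hp.bounds h
  calc r = (Icc 1 r).card := by simp
    _ ≤ colLen n p m c := card_le_card fun r' hr' => by
        rw [mem_Icc] at hr'
        rw [mem_filter, mem_Icc]
        exact ⟨⟨hr'.1, by omega⟩, (hp.inDiag_of_le h hr'.1 hr'.2 hc le_rfl).2⟩

theorem sum_colLen (hp : IsMP l n p) (m : ℕ) :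
    ∑ c ∈ Icc 1 n, colLen n p m c = compSize n p m := by
  simp only [colLen, compSize, card_filter]
  rw [sum_comm]
  refine sum_congr rfl fun r _ => ?_
  rw [← card_filter]
  have hcols : (Icc 1 n).filter (· ≤ p m r) = Icc 1 (p m r) := by
    ext c
    have := hp.apply_le m r
    rw [mem_filter, mem_Icc, mem_Icc]
    omega
  rw [hcols, Nat.card_Icc, Nat.add_sub_cancel]

theorem colTab_le_sum_compSize (hp : IsMP l n p) {r c m : ℕ} (h : InDiag p (r, c, m)) :
    colTab l n p (r, c, m) ≤ ∑ m' ∈ Icc m l, compSize n p m' := by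
  obtain ⟨-, -, hc1, hcn, -, hml⟩ := hp.bounds h
  have hcols : (∑ c' ∈ Icc 1 (c - 1), colLen n p m c') + colLen n p m c ≤ compSize n p m := by
    rw [← sum_colLen hp, sum_Icc_sub_one_add _ hc1]
    exact sum_le_sum_of_subset (Icc_subset_Icc_right hcn)
  rw [← insert_Icc_add_one_left_eq_Icc hml, sum_insert (by simp)]
  have := le_colLen hp h
  simp only [colTab]
  omega

theorem colTab_lt_of_comp_lt (hp : IsMP l n p) {r c m r' c' m' : ℕ}
    (h : InDiag p (r, c, m)) (h' : InDiag p (r', c', m')) (hm : m < m') :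
    colTab l n p (r', c', m') < colTab l n p (r, c, m) := by
  have hsum : ∑ k ∈ Icc m' l, compSize n p k ≤ ∑ k ∈ Icc (m + 1) l, compSize n p k :=
    sum_le_sum_of_subset (Icc_subset_Icc_left hm)
  have := colTab_le_sum_compSize hp h'
  have := (hp.bounds h).1
  simp only [colTab] at *
  omega

theorem colTab_lt_of_col_lt (hp : IsMP l n p) {r c m r' c' : ℕ} (h : InDiag p (r, c, m))
    (hr' : 1 ≤ r') (hc : c < c') : colTab l n p (r, c, m) < colTab l n p (r', c', m) := by
  obtain ⟨-, -, hc1, -⟩ := hp.bounds h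
  have hcols : (∑ k ∈ Icc 1 (c - 1), colLen n p m k) + colLen n p m c ≤
      ∑ k ∈ Icc 1 (c' - 1), colLen n p m k := by
    rw [sum_Icc_sub_one_add _ hc1]
    exact sum_le_sum_of_subset (Icc_subset_Icc_right (by omega))
  have := le_colLen hp h
  simp only [colTab]
  omega

theorem weaklyLeft_of_colTab_le (hp : IsMP l n p) {B C : Node} (hB : InDiag p B)
    (hC : InDiag p C) (h : colTab l n p C ≤ colTab l n p B) : WeaklyLeft C B := by
  obtain ⟨r, c, m⟩ := C
  obtain ⟨r', c', m'⟩ := B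
  simp only [WeaklyLeft]
  by_contra hCB
  rcases Nat.lt_or_ge m m' with hm | hm
  · exact absurd h (not_le.2 (colTab_lt_of_comp_lt hp hC hB hm))
  · obtain rfl : m = m' := by omega
    exact absurd h (not_le.2 (colTab_lt_of_col_lt hp hB (hp.bounds hC).1 (by omega)))

theorem colTab_isTab (hp : IsMP l n p) : IsTab n p (colTab l n p) := by
  refine isTab_of_injOn hp (fun ⟨r, c, m⟩ h => ⟨?_, ?_⟩) fun A B hA hB hAB => ?_
  · have := (hp.bounds h).1
    simp only [colTab]
    omega
  · calc colTab l n p (r, c, m) ≤ ∑ m' ∈ Icc m l, compSize n p m' := colTab_le_sum_compSize hp h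
      _ ≤ ∑ m' ∈ Icc 1 l, compSize n p m' :=
        sum_le_sum_of_subset (Icc_subset_Icc_left (hp.bounds h).2.2.2.2.1)
      _ = n := hp.2.2
  · have hAB' := weaklyLeft_of_colTab_le hp hB hA hAB.le
    have hBA := weaklyLeft_of_colTab_le hp hA hB hAB.ge
    obtain ⟨r, c, m⟩ := A
    obtain ⟨r', c', m'⟩ := B
    simp only [WeaklyLeft] at hAB' hBA
    obtain ⟨rfl, rfl⟩ : m = m' ∧ c = c' := by omega
    simp only [colTab] at hAB
    obtain rfl : r = r' := by omega
    rfl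

theorem colTab_isStd (hp : IsMP l n p) : IsStd p (colTab l n p) :=
  ⟨fun _ _ _ h h' => colTab_lt_of_col_lt hp h (hp.bounds h').1 (Nat.lt_succ_self _),
    fun _ _ _ _ _ => by simp only [colTab]; omega⟩

end ColTab

section Regions

variable {l n : ℕ} {p : ℕ → ℕ → ℕ} {x : Node → ℕ} {i r₀ m : ℕ}

/-- The columns of component `m` of `Shape(x↓i)` that are longer than `r₀`. -/
noncomputable def longCols (n : ℕ) (p : ℕ → ℕ → ℕ) (x : Node → ℕ) (i r₀ m : ℕ) : Finset ℕ :=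
  (Icc 1 n).filter fun c => ∃ r, r₀ < r ∧ InDiag p (r, c, m) ∧ x (r, c, m) ≤ i

def LeftRegion (G : Finset ℕ) (m : ℕ) (A : Node) : Prop :=
  m < A.2.2 ∨ A.2.2 = m ∧ A.2.1 ∈ G

theorem mem_longCols_of_le (hp : IsMP l n p) (hx : IsStd p x) {c c' : ℕ}
    (hc : c ∈ longCols n p x i r₀ m) (hc' : 1 ≤ c') (hcc : c' ≤ c) :
    c' ∈ longCols n p x i r₀ m := by
  rw [longCols, mem_filter, mem_Icc] at hc ⊢
  obtain ⟨⟨-, hcn⟩, r, hr, hd, hxi⟩ := hc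
  have hr1 := (hp.bounds hd).1
  exact ⟨⟨hc', hcc.trans hcn⟩, r, hr, hp.inDiag_of_le hd hr1 le_rfl hc' hcc,
    (hx.mono hp hd hr1 le_rfl hc' hcc).trans hxi⟩

theorem inDiag_of_mem_longCols (hp : IsMP l n p) (hx : IsStd p x) {c r : ℕ}
    (hc : c ∈ longCols n p x i r₀ m) (hr : 1 ≤ r) (hr₀ : r ≤ r₀) :
    InDiag p (r, c, m) ∧ x (r, c, m) ≤ i := by
  rw [longCols, mem_filter, mem_Icc] at hc
  obtain ⟨⟨hc1, -⟩, r', hr', hd, hxi⟩ := hc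
  exact ⟨hp.inDiag_of_le hd hr (by omega) hc1 le_rfl,
    (hx.mono hp hd hr (by omega) hc1 le_rfl).trans hxi⟩

theorem LeftRegion.of_weaklyLeft (hp : IsMP l n p) (hx : IsStd p x) {A B : Node}
    (hB : LeftRegion (longCols n p x i r₀ m) m B) (hAB : WeaklyLeft A B) (hA : 1 ≤ A.2.1) :
    LeftRegion (longCols n p x i r₀ m) m A := by
  obtain ⟨rA, cA, mA⟩ := A
  obtain ⟨rB, cB, mB⟩ := B
  simp only [LeftRegion, WeaklyLeft] at hAB hB hA ⊢
  rcases hB with hm | ⟨rfl, hcB⟩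
  · omega
  · rcases hAB with hm | ⟨rfl, hc⟩
    · exact Or.inl hm
    · exact Or.inr ⟨rfl, mem_longCols_of_le hp hx hcB hA hc⟩

theorem filter_not_weaklyAbove_subset_leftRegion (hp : IsMP l n p) :
    (cellsLE l n p x i).filter (fun A => ¬WeaklyAbove A (r₀, 0, m)) ⊆
      (cellsLE l n p x i).filter (LeftRegion (longCols n p x i r₀ m) m) := by
  refine fun ⟨r, c, m'⟩ hA => ?_
  rw [mem_filter, mem_cellsLE hp] at hA
  obtain ⟨⟨hA, hAi⟩, hAR⟩ := hA
  simp only [WeaklyAbove] at hAR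
  obtain ⟨-, -, hc1, hcn, -, -⟩ := hp.bounds hA
  refine mem_filter.2 ⟨(mem_cellsLE hp).2 ⟨hA, hAi⟩, ?_⟩
  rcases Nat.lt_or_ge m m' with hm | hm
  · exact Or.inl hm
  · obtain rfl : m' = m := by omega
    exact Or.inr ⟨rfl, mem_filter.2 ⟨mem_Icc.2 ⟨hc1, hcn⟩, r, by omega, hA, hAi⟩⟩

theorem mul_card_longCols_le (hp : IsMP l n p) (hx : IsStd p x) :
    r₀ * (longCols n p x i r₀ m).card ≤
      (((cellsLE l n p x i).filter (LeftRegion (longCols n p x i r₀ m) m)).filter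
        fun A => WeaklyAbove A (r₀, 0, m)).card := by
  calc r₀ * (longCols n p x i r₀ m).card = (Icc 1 r₀ ×ˢ longCols n p x i r₀ m ×ˢ {m}).card := by
        simp
    _ ≤ _ := card_le_card fun ⟨r, c, m'⟩ hA => by
      simp only [mem_product, mem_Icc, mem_singleton] at hA
      obtain ⟨⟨hr1, hr⟩, hc, rfl⟩ := hA
      obtain ⟨hd, hxi⟩ := inDiag_of_mem_longCols hp hx hc hr1 hr
      exact mem_filter.2 ⟨mem_filter.2 ⟨(mem_cellsLE hp).2 ⟨hd, hxi⟩, Or.inr ⟨rfl, hc⟩⟩,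
        Or.inr ⟨rfl, hr⟩⟩

theorem card_filter_leftRegion_le (hp : IsMP l n p) (G : Finset ℕ) :
    (((cellsLE l n p x i).filter (LeftRegion G m)).filter
        fun A => WeaklyAbove A (r₀, 0, m)).card ≤ r₀ * G.card := by
  calc _ ≤ (Icc 1 r₀ ×ˢ G ×ˢ {m}).card := card_le_card fun ⟨r, c, m'⟩ hA => by
        rw [mem_filter, mem_filter, mem_cellsLE hp] at hA
        obtain ⟨⟨⟨hA, -⟩, hAL⟩, hAR⟩ := hA
        have hr1 := (hp.bounds hA).1
        simp only [LeftRegion, WeaklyAbove] at hAL hAR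
        simp only [mem_product, mem_Icc, mem_singleton]
        rcases hAL with hm | ⟨rfl, hc⟩
        · omega
        · exact ⟨⟨hr1, by omega⟩, hc, rfl⟩
    _ = r₀ * G.card := by simp

theorem mul_le_card_filter_cellsLE (hp : IsMP l n p) (hx : IsStd p x) {r c : ℕ}
    (hA : InDiag p (r, c, m)) :
    r * c ≤ ((cellsLE l n p x (x (r, c, m))).filter fun C => WeaklyAbove C (r, 0, m)).card := by
  calc r * c = (Icc 1 r ×ˢ Icc 1 c ×ˢ {m}).card := by simp
    _ ≤ _ := card_le_card fun ⟨r', c', m'⟩ hC => by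
      simp only [mem_product, mem_Icc, mem_singleton] at hC
      obtain ⟨⟨hr1, hr⟩, ⟨hc1, hc⟩, rfl⟩ := hC
      exact mem_filter.2 ⟨(mem_cellsLE hp).2 ⟨hp.inDiag_of_le hA hr1 hr hc1 hc,
        hx.mono hp hA hr1 hr hc1 hc⟩, Or.inr ⟨rfl, hr⟩⟩

end Regions

section Dominance

variable {l n j : ℕ} {lam mu : ℕ → ℕ → ℕ} {s : Node → ℕ}

theorem card_filter_cellsLE_le_of_colDomOn (hlam : IsMP l n lam) (hmu : IsMP l n mu)
    (hs : IsTab n mu s) (hdom : ColDomOn l n lam mu s j) {i : ℕ} (hij : i ≤ j)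
    {Q : Node → Prop} [DecidablePred Q]
    (hQ : ∀ A B, InDiag mu A → InDiag lam B → WeaklyLeft A B → Q B → Q A) :
    ((cellsLE l n lam (colTab l n lam) i).filter Q).card ≤
      ((cellsLE l n mu s i).filter Q).card := by
  have ht := colTab_isTab (l := l) hlam
  rw [← card_image_of_injOn (f := colTab l n lam), ← card_image_of_injOn (f := s)]
  · refine card_le_card fun k hk => ?_
    obtain ⟨B, hB, rfl⟩ := mem_image.1 hk
    rw [mem_filter, mem_cellsLE hlam] at hB
    obtain ⟨⟨hB, hBi⟩, hQB⟩ := hB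
    obtain ⟨hB1, hBn⟩ := ht.1 B hB
    obtain ⟨A, hA, hsA⟩ := hs.2.2 _ hB1 hBn
    have hAB := hdom _ A B hB1 (hBi.trans hij) hA hsA hB rfl
    exact mem_image.2
      ⟨A, mem_filter.2 ⟨(mem_cellsLE hmu).2 ⟨hA, hsA ▸ hBi⟩, hQ A B hA hB hAB hQB⟩, hsA⟩
  · exact fun A hA B hB =>
      hs.2.1 A B ((mem_cellsLE hmu).1 (mem_filter.1 hA).1).1
        ((mem_cellsLE hmu).1 (mem_filter.1 hB).1).1
  · exact fun A hA B hB =>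
      ht.2.1 A B ((mem_cellsLE hlam).1 (mem_filter.1 hA).1).1
        ((mem_cellsLE hlam).1 (mem_filter.1 hB).1).1

theorem dom_shape_of_colDomOn (hlam : IsMP l n lam) (hmu : IsMP l n mu) (hs : IsTab n mu s)
    (hdom : ColDomOn l n lam mu s j) (hjn : j ≤ n) {i : ℕ} (hij : i ≤ j) :
    Dom l n (shape n lam (colTab l n lam) i) (shape n mu s i) := by
  rw [dom_shape_iff hlam hmu]
  intro m r₀ _ _
  have hstd := colTab_isStd (l := l) hlam
  set T := cellsLE l n lam (colTab l n lam) i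
  set S := cellsLE l n mu s i
  set G := longCols n lam (colTab l n lam) i r₀ m
  set R : Node → Prop := fun A => WeaklyAbove A (r₀, 0, m)
  show (S.filter R).card ≤ (T.filter R).card
  have hT : T.card = i := card_cellsLE hlam (colTab_isTab hlam) (hij.trans hjn)
  have hS : S.card = i := card_cellsLE hmu hs (hij.trans hjn)
  have hTR := card_filter_add_card_filter_not (s := T) R
  have hSR := card_filter_add_card_filter_not (s := S) R
  have hTLR := card_filter_add_card_filter_not (s := T.filter (LeftRegion G m)) R
  have hSLR := card_filter_add_card_filter_not (s := S.filter (LeftRegion G m)) R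
  have hT_notR : (T.filter fun A => ¬R A).card ≤
      ((T.filter (LeftRegion G m)).filter fun A => ¬R A).card :=
    card_le_card fun A hA =>
      mem_filter.2 ⟨filter_not_weaklyAbove_subset_leftRegion hlam hA, (mem_filter.1 hA).2⟩
  have hS_notR : ((S.filter (LeftRegion G m)).filter fun A => ¬R A).card ≤
      (S.filter fun A => ¬R A).card :=
    card_le_card (filter_subset_filter _ (filter_subset _ _))
  have hT_block : r₀ * G.card ≤ ((T.filter (LeftRegion G m)).filter R).card :=
    mul_card_longCols_le hlam hstd
  have hS_block : ((S.filter (LeftRegion G m)).filter R).card ≤ r₀ * G.card :=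
    card_filter_leftRegion_le hmu G
  have htransfer : (T.filter (LeftRegion G m)).card ≤ (S.filter (LeftRegion G m)).card :=
    card_filter_cellsLE_le_of_colDomOn hlam hmu hs hdom hij fun A B hA _ hAB hB =>
      hB.of_weaklyLeft hlam hstd hAB hA.1
  omega

theorem colDomOn_of_dom_shape (hlam : IsMP l n lam) (hmu : IsMP l n mu) (hstd : IsStd mu s)
    (hdom : ∀ i, 1 ≤ i → i ≤ j → Dom l n (shape n lam (colTab l n lam) i) (shape n mu s i)) :
    ColDomOn l n lam mu s j := by
  rintro k ⟨rA, cA, mA⟩ ⟨rB, cB, mB⟩ hk hkj hA rfl hB hBk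
  by_contra hAB
  obtain ⟨hrA, -, hcA, -, hmA1, hmAl⟩ := hmu.bounds hA
  have hcount := (dom_shape_iff hlam hmu _ _ _).1 (hdom _ hk hkj) mA rA hmA1 hmAl
  have hS_block := mul_le_card_filter_cellsLE hmu hstd hA
  -- every entry of `t_λ` up to `k` lies weakly left of `B`, hence strictly left of column `cA`
  have hT_block : ((cellsLE l n lam (colTab l n lam) (s (rA, cA, mA))).filter
      fun C => WeaklyAbove C (rA, 0, mA)).card ≤ rA * (cA - 1) := by
    calc _ ≤ (Icc 1 rA ×ˢ Icc 1 (cA - 1) ×ˢ {mA}).card :=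
          card_le_card fun ⟨r, c, m⟩ hC => by
            rw [mem_filter, mem_cellsLE hlam] at hC
            obtain ⟨⟨hC, hCk⟩, hCR⟩ := hC
            have hCB := weaklyLeft_of_colTab_le hlam hB hC (hCk.trans_eq hBk.symm)
            have := hlam.bounds hC
            simp only [mem_product, mem_Icc, mem_singleton]
            simp only [WeaklyLeft, WeaklyAbove] at hAB hCB hCR
            omega
      _ = rA * (cA - 1) := by simp
  have : rA * (cA - 1) < rA * cA := Nat.mul_lt_mul_of_pos_left (by omega) (by omega)
  omega

end Dominance

theorem colDom_iff_shape_dominance_general (l n : ℕ)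
    (lam mu : ℕ → ℕ → ℕ) (hlam : IsMP l n lam) (hmu : IsMP l n mu)
    (j : ℕ) (hj2 : j ≤ n)
    (s : Node → ℕ) (hs : IsTab n mu s) (hstd : IsStd mu s) :
    ColDomOn l n lam mu s j ↔
      ∀ m, 1 ≤ m → m ≤ j →
        Dom l n (shape n lam (colTab l n lam) m) (shape n mu s m) :=
  ⟨fun h _ _ hm => dom_shape_of_colDomOn hlam hmu hs h hj2 hm,
    colDomOn_of_dom_shape hlam hmu hstd⟩

/-- A standard `μ`-tableau `s` is `λ`-column-dominated on `1,…,j` iff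
`Shape(t_λ↓m) ⊵ Shape(s↓m)` for all `m = 1,…,j`. -/
theorem colDom_iff_shape_dominance (l n : ℕ) (hl : 1 ≤ l) (hn : 1 ≤ n)
    (lam mu : ℕ → ℕ → ℕ) (hlam : IsMP l n lam) (hmu : IsMP l n mu)
    (j : ℕ) (hj1 : 1 ≤ j) (hj2 : j ≤ n)
    (s : Node → ℕ) (hs : IsTab n mu s) (hstd : IsStd mu s) :
    ColDomOn l n lam mu s j ↔
      ∀ m, 1 ≤ m → m ≤ j →
        Dom l n (shape n lam (colTab l n lam) m) (shape n mu s m) :=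
  colDom_iff_shape_dominance_general l n lam mu hlam hmu j hj2 s hs hstd

end FS
end
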